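/- Let B_i = R ⊗_{R^i} R where R = k[x_1,…,x_{n+1}] and R^i is the subring of s_i-invariants. The set of elements v ∈ B_i such that ξ·v = v·ξ for all ξ ∈ R (i.e., the R-bimodule maps R → B_i) is a free left R-module of rank 1 generated by v₀ = 1 ⊗ x_i − x_{i+1} ⊗ 1. -/

import Mathlib

/-!
Write `x = x_i`, `y = x_{i+1}`. Since `x + y` and `x y` lie in `R^i` and `x² = (x + y) x - x y`,
every polynomial is `a + b x` with `a, b ∈ R^i`, so every `v ∈ B_i` is `a ⊗ 1 + b ⊗ x`. The twisted
multiplication `a ⊗ b ↦ a · s_i(b)` turns `(x ⊗ 1 - 1 ⊗ x) v = 0` into `(x - y)(a + b y) = 0`. Over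
any `k`, `x - y` is a non-zero-divisor of `R` (a linear change of variables turns it into `x`), so
`a = -b y` and `v = (b ⊗ 1) v₀`. Conversely, centrality of `v₀` only has to be checked on the
generators `x_j`, and for `x` it is `(x ⊗ 1 - 1 ⊗ x)(1 ⊗ x - y ⊗ 1) = 0`, which again uses
`x + y, x y ∈ R^i`. Freeness: the multiplication map sends `(f ⊗ 1) v₀` to `f (x - y)`.
-/

open MvPolynomial TensorProduct

/-- The subalgebra `R^i` of polynomials invariant under the transposition `s_i = (i,i+1)`. -/
noncomputable def Rinv (n : ℕ) (k : Type*) [CommRing k] (i : Fin n) :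
    Subalgebra k (MvPolynomial (Fin (n + 1)) k) :=
  AlgHom.equalizer (rename (Equiv.swap i.castSucc i.succ))
    (AlgHom.id k (MvPolynomial (Fin (n + 1)) k))

/-- The Soergel bimodule `B_i = R ⊗_{R^i} R` (ungraded). -/
abbrev SoergelB (n : ℕ) (k : Type*) [CommRing k] (i : Fin n) :=
  TensorProduct (Rinv n k i) (MvPolynomial (Fin (n + 1)) k) (MvPolynomial (Fin (n + 1)) k)

/-- The element `v₀ = 1 ⊗ x_i − x_{i+1} ⊗ 1` of `B_i`. -/
noncomputable def v0 (n : ℕ) (k : Type*) [CommRing k] (i : Fin n) : SoergelB n k i :=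
  (1 : MvPolynomial (Fin (n + 1)) k) ⊗ₜ[Rinv n k i] (X i.castSucc) -
    (X i.succ) ⊗ₜ[Rinv n k i] (1 : MvPolynomial (Fin (n + 1)) k)

namespace MvPolynomial

variable {ι k : Type*} [CommRing k]

theorem apply_mul_eq_apply_mul_of_C_of_X {B : Type*} [CommSemiring B]
    (φ ψ : MvPolynomial ι k →+* B) (v : B) (hC : ∀ c, φ (C c) * v = ψ (C c) * v)
    (hX : ∀ j, φ (X j) * v = ψ (X j) * v) (p : MvPolynomial ι k) : φ p * v = ψ p * v := by
  induction p using MvPolynomial.induction_on with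
  | C c => exact hC c
  | add p q hp hq => rw [map_add, map_add, add_mul, add_mul, hp, hq]
  | mul_X p j hp =>
    calc φ (p * X j) * v = φ p * (φ (X j) * v) := by rw [map_mul, mul_assoc]
      _ = ψ (X j) * (φ p * v) := by rw [hX]; ring
      _ = ψ (p * X j) * v := by rw [hp, map_mul]; ring

variable [DecidableEq ι]

theorem isLeftRegular_X_sub_X {a b : ι} (hab : a ≠ b) :
    IsLeftRegular (X a - X b : MvPolynomial ι k) := by
  let shear (s : k) : MvPolynomial ι k →ₐ[k] MvPolynomial ι k :=
    aeval (Function.update X a (X a + C s * X b))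
  have shear_comp_shear_neg (s : k) : (shear s).comp (shear (-s)) = AlgHom.id k _ := by
    ext j
    by_cases hj : j = a
    · subst hj; simp [shear, Function.update_of_ne hab.symm]
    · simp [shear, Function.update_of_ne hj]
  let ψ : MvPolynomial ι k ≃ₐ[k] MvPolynomial ι k := AlgEquiv.ofAlgHom (shear (-1)) (shear 1)
    (by simpa using shear_comp_shear_neg (-1)) (shear_comp_shear_neg 1)
  have hψ (f : MvPolynomial ι k) : (X a - X b) * f = ψ (X a * ψ.symm f) := by
    rw [map_mul, ψ.apply_symm_apply]
    simp [ψ, shear, sub_eq_add_neg]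
  intro f g hfg
  simp only [hψ] at hfg
  exact ψ.symm.injective (isRegular_X.left (ψ.injective hfg))

theorem rename_swap_X_of_ne {a b j : ι} (hja : j ≠ a) (hjb : j ≠ b) :
    rename (Equiv.swap a b) (X j : MvPolynomial ι k) = X j := by
  rw [rename_X, Equiv.swap_apply_of_ne_of_ne hja hjb]

variable (a b : ι)

theorem rename_swap_X_add_X :
    rename (Equiv.swap a b) (X a + X b : MvPolynomial ι k) = X a + X b := by
  simp [add_comm]

theorem rename_swap_X_mul_X :
    rename (Equiv.swap a b) (X a * X b : MvPolynomial ι k) = X a * X b := by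
  simp [mul_comm]

theorem exists_rename_swap_invariant_add_mul_X (f : MvPolynomial ι k) :
    ∃ p q : MvPolynomial ι k, rename (Equiv.swap a b) p = p ∧ rename (Equiv.swap a b) q = q ∧
      f = p + q * X a := by
  induction f using MvPolynomial.induction_on with
  | C c => exact ⟨C c, 0, by simp, by simp, by ring⟩
  | add f g hf hg =>
    obtain ⟨p, q, hp, hq, rfl⟩ := hf
    obtain ⟨p', q', hp', hq', rfl⟩ := hg
    exact ⟨p + p', q + q', by rw [map_add, hp, hp'], by rw [map_add, hq, hq'], by ring⟩
  | mul_X f j hf =>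
    obtain ⟨p, q, hp, hq, rfl⟩ := hf
    have he := rename_swap_X_add_X (k := k) a b
    have hm := rename_swap_X_mul_X (k := k) a b
    -- `x_a² = (x_a + x_b) x_a - x_a x_b` and `x_b = (x_a + x_b) - x_a`
    by_cases hja : j = a
    · subst hja
      refine ⟨-(X j * X b * q), p + (X j + X b) * q, ?_, ?_, by ring⟩ <;>
        simp only [map_neg, map_mul, map_add, hp, hq, he, hm]
    by_cases hjb : j = b
    · subst hjb
      refine ⟨(X a + X j) * p + X a * X j * q, -p, ?_, ?_, by ring⟩ <;>
        simp only [map_neg, map_mul, map_add, hp, hq, he, hm]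
    · have hj := rename_swap_X_of_ne (k := k) hja hjb
      exact ⟨p * X j, q * X j, by rw [map_mul, hp, hj], by rw [map_mul, hq, hj], by ring⟩

end MvPolynomial

namespace Rinv

variable {n : ℕ} {k : Type*} [CommRing k] (i : Fin n)

local notation "𝓡" => MvPolynomial (Fin (n + 1)) k

theorem mul_tmul_eq_tmul_mul {c : 𝓡} (hc : c ∈ Rinv n k i) (g h : 𝓡) :
    (c * g) ⊗ₜ[Rinv n k i] h = g ⊗ₜ (c * h) :=
  smul_tmul (⟨c, hc⟩ : Rinv n k i) g h

theorem tmul_one_eq_one_tmul {c : 𝓡} (hc : c ∈ Rinv n k i) :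
    c ⊗ₜ[Rinv n k i] (1 : 𝓡) = 1 ⊗ₜ c :=
  Algebra.TensorProduct.tmul_one_eq_one_tmul (⟨c, hc⟩ : Rinv n k i)

noncomputable def swapAlgHom : 𝓡 →ₐ[Rinv n k i] 𝓡 :=
  { rename (Equiv.swap i.castSucc i.succ) with commutes' := fun r => r.2 }

theorem swapAlgHom_apply (f : 𝓡) : swapAlgHom i f = rename (Equiv.swap i.castSucc i.succ) f := rfl

end Rinv

namespace SoergelB

variable {n : ℕ} {k : Type*} [CommRing k] (i : Fin n)

local notation "𝓡" => MvPolynomial (Fin (n + 1)) k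

theorem exists_eq_tmul_one_add_tmul_X (v : SoergelB n k i) :
    ∃ a b : 𝓡, v = a ⊗ₜ[Rinv n k i] 1 + b ⊗ₜ[Rinv n k i] X i.castSucc := by
  induction v using TensorProduct.induction_on with
  | zero => exact ⟨0, 0, by simp⟩
  | tmul g f =>
    obtain ⟨p, q, hp, hq, rfl⟩ := exists_rename_swap_invariant_add_mul_X i.castSucc i.succ f
    refine ⟨p * g, q * g, ?_⟩
    rw [tmul_add, Rinv.mul_tmul_eq_tmul_mul i hp, Rinv.mul_tmul_eq_tmul_mul i hq, mul_one]
  | add v w hv hw =>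
    obtain ⟨a, b, rfl⟩ := hv
    obtain ⟨a', b', rfl⟩ := hw
    exact ⟨a + a', b + b', by rw [add_tmul, add_tmul]; abel⟩

theorem X_tmul_one_add_X_tmul_one :
    (X i.castSucc : 𝓡) ⊗ₜ[Rinv n k i] (1 : 𝓡) + (X i.succ : 𝓡) ⊗ₜ[Rinv n k i] (1 : 𝓡) =
      1 ⊗ₜ[Rinv n k i] (X i.castSucc : 𝓡) + 1 ⊗ₜ[Rinv n k i] (X i.succ : 𝓡) := by
  rw [← add_tmul, ← tmul_add]
  exact Rinv.tmul_one_eq_one_tmul i (rename_swap_X_add_X _ _)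

theorem X_castSucc_tmul_one_mul_v0 :
    (X i.castSucc ⊗ₜ[Rinv n k i] (1 : 𝓡)) * v0 n k i =
      (1 ⊗ₜ (X i.castSucc : 𝓡)) * v0 n k i := by
  have hp : ((X i.castSucc : 𝓡) ⊗ₜ[Rinv n k i] (1 : 𝓡)) * ((X i.succ : 𝓡) ⊗ₜ[Rinv n k i] 1) =
      (1 ⊗ₜ[Rinv n k i] (X i.castSucc : 𝓡)) * (1 ⊗ₜ[Rinv n k i] (X i.succ : 𝓡)) := by
    simp only [Algebra.TensorProduct.tmul_mul_tmul, mul_one]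
    exact Rinv.tmul_one_eq_one_tmul i (rename_swap_X_mul_X _ _)
  rw [v0]
  linear_combination
    (1 ⊗ₜ[Rinv n k i] (X i.castSucc : 𝓡)) * X_tmul_one_add_X_tmul_one (k := k) i - hp

theorem tmul_one_mul_v0 (ξ : 𝓡) :
    (ξ ⊗ₜ[Rinv n k i] (1 : 𝓡)) * v0 n k i = (1 ⊗ₜ ξ) * v0 n k i := by
  refine apply_mul_eq_apply_mul_of_C_of_X
    (Algebra.TensorProduct.includeLeftRingHom : 𝓡 →+* SoergelB n k i)
    (Algebra.TensorProduct.includeRight : 𝓡 →ₐ[Rinv n k i] SoergelB n k i).toRingHom _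
    (fun c => ?_) (fun j => ?_) ξ
  · show C c ⊗ₜ[Rinv n k i] (1 : 𝓡) * v0 n k i = 1 ⊗ₜ C c * v0 n k i
    rw [Rinv.tmul_one_eq_one_tmul i (rename_C _ c)]
  show X j ⊗ₜ[Rinv n k i] (1 : 𝓡) * v0 n k i = 1 ⊗ₜ X j * v0 n k i
  by_cases hjc : j = i.castSucc
  · subst hjc
    exact X_castSucc_tmul_one_mul_v0 (k := k) i
  by_cases hjs : j = i.succ
  · subst hjs
    linear_combination
      v0 n k i * X_tmul_one_add_X_tmul_one (k := k) i - X_castSucc_tmul_one_mul_v0 (k := k) i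
  rw [Rinv.tmul_one_eq_one_tmul i (rename_swap_X_of_ne hjc hjs)]

theorem exists_eq_tmul_one_mul_v0 {v : SoergelB n k i}
    (hv : (X i.castSucc ⊗ₜ[Rinv n k i] (1 : 𝓡)) * v = (1 ⊗ₜ X i.castSucc) * v) :
    ∃ f : 𝓡, v = (f ⊗ₜ[Rinv n k i] 1) * v0 n k i := by
  obtain ⟨a, b, rfl⟩ := exists_eq_tmul_one_add_tmul_X i v
  have hab : a + b * X i.succ = 0 := by
    apply (isLeftRegular_X_sub_X (Fin.castSucc_lt_succ (i := i)).ne).mul_left_eq_zero_iff.1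
    have := congrArg (Algebra.TensorProduct.productMap (AlgHom.id _ _) (Rinv.swapAlgHom i)) hv
    simp only [map_mul, map_add, Algebra.TensorProduct.productMap_apply_tmul, AlgHom.coe_id,
      id_eq, Rinv.swapAlgHom_apply, rename_X, Equiv.swap_apply_left, map_one, mul_one, one_mul]
      at this
    linear_combination this
  refine ⟨b, ?_⟩
  rw [eq_neg_of_add_eq_zero_left hab, v0]
  simp only [mul_sub, Algebra.TensorProduct.tmul_mul_tmul, mul_one, one_mul, neg_tmul]
  abel

theorem eq_zero_of_tmul_one_mul_v0_eq_zero {f : 𝓡}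
    (h : (f ⊗ₜ[Rinv n k i] (1 : 𝓡)) * v0 n k i = 0) : f = 0 := by
  have := congrArg (Algebra.TensorProduct.lmul' (Rinv n k i)) h
  simp only [v0, map_mul, map_sub, map_zero, Algebra.TensorProduct.lmul'_apply_tmul, mul_one,
    one_mul] at this
  rw [mul_comm] at this
  exact (isLeftRegular_X_sub_X (Fin.castSucc_lt_succ (i := i)).ne).mul_left_eq_zero_iff.1 this

end SoergelB

/-- In `B_i = R ⊗_{R^i} R`, the set of elements `v` with `ξ·v = v·ξ` for all `ξ ∈ R`
(equivalently, the space of `R`-bimodule maps `R → B_i`) is a free left `R`-module of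
rank 1 generated by `v₀ = 1 ⊗ x_i − x_{i+1} ⊗ 1`. -/
theorem soergel_central_elements (n : ℕ) (k : Type*) [CommRing k] (i : Fin n) :
    (∀ v : SoergelB n k i,
      (∀ ξ : MvPolynomial (Fin (n + 1)) k,
        (ξ ⊗ₜ[Rinv n k i] (1 : MvPolynomial (Fin (n + 1)) k)) * v =
          ((1 : MvPolynomial (Fin (n + 1)) k) ⊗ₜ[Rinv n k i] ξ) * v) ↔
      (∃ f : MvPolynomial (Fin (n + 1)) k,
        v = (f ⊗ₜ[Rinv n k i] (1 : MvPolynomial (Fin (n + 1)) k)) * v0 n k i)) ∧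
    (∀ f : MvPolynomial (Fin (n + 1)) k,
      (f ⊗ₜ[Rinv n k i] (1 : MvPolynomial (Fin (n + 1)) k)) * v0 n k i = 0 → f = 0) := by
  refine ⟨fun v => ⟨fun hv => SoergelB.exists_eq_tmul_one_mul_v0 i (hv _), ?_⟩,
    fun f => SoergelB.eq_zero_of_tmul_one_mul_v0_eq_zero i⟩
  rintro ⟨f, rfl⟩ ξ
  linear_combination (f ⊗ₜ[Rinv n k i] (1 : MvPolynomial (Fin (n + 1)) k)) *
    SoergelB.tmul_one_mul_v0 i ξ
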